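/- Fix real parameters μ₁, μ₂, μ₃, μ₄. Define the vector fields η₁(x) = (1,0,0,0), η₂(x) = (0,1,0,0), η₃(x) = (x₂, −x₁, 1, 0), η₄(x) = (0,0,0,1) on ℝ⁴ and the smooth functions 𝐀₁(x) = 0, 𝐀₂(x) = μ₁x₁, 𝐀₃(x) = μ₃x₁ + μ₄x₂ + (μ₁/2)(x₂² − x₁²), 𝐀₄(x) = μ₂x₃. Let C_{ab}^c be the structure constants of e(2) ⊕ ℝ (nonzero values C₁₃² = 1, C₃₁² = −1, C₂₃¹ = −1, C₃₂¹ = 1) and set 𝐅₁₂ = μ₁, 𝐅₁₃ = μ₃, 𝐅₂₃ = μ₄, 𝐅₃₄ = μ₂, with 𝐅 antisymmetric and all other independent entries zero. Then for all a, b ∈ {1,2,3,4} and all x ∈ ℝ⁴: ηₐ(𝐀_b)(x) − η_b(𝐀ₐ)(x) + Σ_c C_{ab}^c 𝐀_c(x) = 𝐅_{ab}, where ηₐ(f) denotes the directional derivative of f along the vector field ηₐ. -/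

import Mathlib

noncomputable section

/-- The right-invariant vector fields `η₁, η₂, η₃, η₄` of `E(2) × ℝ` on `ℝ⁴`
(indexed from `0`). -/
def η : Fin 4 → ((Fin 4 → ℝ) → (Fin 4 → ℝ)) :=
  ![fun _ => ![1, 0, 0, 0],
    fun _ => ![0, 1, 0, 0],
    fun x => ![x 1, -x 0, 1, 0],
    fun _ => ![0, 0, 0, 1]]

/-- The tetradic components `𝐀₁ = 0`, `𝐀₂ = μ₁x₁`,
`𝐀₃ = μ₃x₁ + μ₄x₂ + (μ₁/2)(x₂² − x₁²)`, `𝐀₄ = μ₂x₃` of the vector potential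
(indexed from `0`). -/
def Atet (μ₁ μ₂ μ₃ μ₄ : ℝ) : Fin 4 → (Fin 4 → ℝ) → ℝ :=
  ![fun _ => 0,
    fun x => μ₁ * x 0,
    fun x => μ₃ * x 0 + μ₄ * x 1 + μ₁ / 2 * ((x 1) ^ 2 - (x 0) ^ 2),
    fun x => μ₂ * x 2]

/-- The structure constants `C_{ab}^c` of `e(2) ⊕ ℝ`: nonzero values
`C₁₃² = 1`, `C₃₁² = −1`, `C₂₃¹ = −1`, `C₃₂¹ = 1` (indices from `0`). -/
def C : Fin 4 → Fin 4 → Fin 4 → ℝ := fun a b c =>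
  if a = 0 ∧ b = 2 ∧ c = 1 then 1
  else if a = 2 ∧ b = 0 ∧ c = 1 then -1
  else if a = 1 ∧ b = 2 ∧ c = 0 then -1
  else if a = 2 ∧ b = 1 ∧ c = 0 then 1
  else 0

/-- The components of the invariant 2-cocycle: `𝐅₁₂ = μ₁`, `𝐅₁₃ = μ₃`, `𝐅₂₃ = μ₄`,
`𝐅₃₄ = μ₂`, antisymmetric, all other independent entries zero. -/
def Fb (μ₁ μ₂ μ₃ μ₄ : ℝ) : Matrix (Fin 4) (Fin 4) ℝ :=
  !![0, μ₁, μ₃, 0;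
     -μ₁, 0, μ₄, 0;
     -μ₃, -μ₄, 0, μ₂;
     0, 0, -μ₂, 0]

/-! The components `𝐀_b` are polynomials, so `d𝐀_b` is explicit, and checking the equation is
a finite computation: the terms `±μ₁xᵢ` coming from the quadratic part of `𝐀₃` cancel, for
`(a, b) = (1, 3)` against `C₁₃² 𝐀₂ = μ₁x₁` and for `(a, b) = (2, 3)` against `η₃𝐀₂ = μ₁x₂`. -/

lemma fderiv_Atet_apply (μ₁ μ₂ μ₃ μ₄ : ℝ) (b : Fin 4) (x v : Fin 4 → ℝ) :
    fderiv ℝ (Atet μ₁ μ₂ μ₃ μ₄ b) x v =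
      ![0, μ₁ * v 0, μ₃ * v 0 + μ₄ * v 1 + μ₁ * (x 1 * v 1 - x 0 * v 0), μ₂ * v 2] b := by
  have hx (i : Fin 4) : HasFDerivAt (fun y : Fin 4 → ℝ => y i) (ContinuousLinearMap.proj i) x :=
    hasFDerivAt_apply (𝕜 := ℝ) i x
  match b with
  | 0 => simp [Atet]
  | 1 => simp [Atet, ((hx 0).const_mul μ₁).fderiv]
  | 2 =>
    have hA : HasFDerivAt (Atet μ₁ μ₂ μ₃ μ₄ 2) _ x :=
      (((hx 0).const_mul μ₃).add ((hx 1).const_mul μ₄)).add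
        ((((hx 1).pow 2).sub ((hx 0).pow 2)).const_mul (μ₁ / 2))
    simp only [hA.fderiv, add_apply, sub_apply, smul_apply, ContinuousLinearMap.proj_apply,
      smul_eq_mul, nsmul_eq_mul, Matrix.cons_val]
    ring
  | 3 => simp [Atet, ((hx 2).const_mul μ₂).fderiv]

/-- the tetradic components `𝐀ₐ` satisfy
`ηₐ𝐀_b − η_b𝐀ₐ + C_{ab}^c 𝐀_c = 𝐅_{ab}` for all `a, b` and all points, where
`ηₐ(f)(x)` is the directional derivative of `f` along `ηₐ`. -/
theorem tetradic_potential_equation (μ₁ μ₂ μ₃ μ₄ : ℝ) :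
    ∀ (a b : Fin 4) (x : Fin 4 → ℝ),
      fderiv ℝ (Atet μ₁ μ₂ μ₃ μ₄ b) x (η a x)
        - fderiv ℝ (Atet μ₁ μ₂ μ₃ μ₄ a) x (η b x)
        + ∑ c : Fin 4, C a b c * Atet μ₁ μ₂ μ₃ μ₄ c x
        = Fb μ₁ μ₂ μ₃ μ₄ a b := by
  intro a b x
  simp only [fderiv_Atet_apply, Fin.sum_univ_four]
  fin_cases a <;> fin_cases b <;> simp [η, C, Atet, Fb]
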